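/- Let G = ({1,...,n}, E) be a connected undirected graph in which every node is its own neighbor, let U ≥ n, and consider the accelerated consensus iteration y_i(t+1) = x_i(t) + ∑_{j ∈ N(i), j ≠ i} (x_j(t) − x_i(t)) / (2 max(d(i), d(j))), x_i(t+1) = y_i(t+1) + (1 − 2/(9U+1))·(y_i(t+1) − y_i(t)), initialized with y(0) = x(0). Then for every ε ∈ (0,1) and every integer t ≥ 9U · ln(18/ε), one has E(t) ≤ ε · E(0), where E(t) = ||x(t) − x̄ 1||₂². -/

import Mathlib

/-!
Write `W` for the lazy Metropolis operator, so that the iteration reads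
`x(t+2) = (1+β) W x(t+1) - β W x(t)` and the same recurrence holds for `x(t) - x̄ 1`, which
stays orthogonal to the constants. `W` is symmetric and positive semidefinite, and on vectors of
zero sum its quadratic form is at most `1 - 1/(24 n²)` times the squared norm. This Poincaré
inequality follows from Cauchy–Schwarz along a shortest path between a largest and a smallest
coordinate: each vertex lies in at most three closed neighbourhoods of vertices of that path, so
the degrees along it add up to at most `3n`.

In an orthonormal eigenbasis of `W`, each coordinate solves `u(t+2) = a u(t+1) - b u(t)` with
`a = (1+β)μ`, `b = βμ`, and the energy `u(t+1)² - a u(t) u(t+1) + b u(t)²` is multiplied by `b`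
at every step. For `μ ≤ 1/2` this gives the rate `2^{-t}`, and for larger `μ ≤ 1 - 1/(24U²)` the
rate `(β (1 - 1/(24U²)))^t` with a constant `3`. Both rates are below `(ε/18)²` once
`t ≥ 9U ln(18/ε)`.
-/

open Finset Real
open scoped RealInnerProductSpace

section AccelOrbit

variable {M : Type*} [AddCommGroup M] [Module ℝ M]

/-- Eliminating `y` from `y(t+1) = T x(t)`, `x(t+1) = y(t+1) + β (y(t+1) - y(t))`,
`y(0) = x(0)` leaves this second-order recurrence for `x`. -/
def IsAccelOrbit (T : M → M) (β : ℝ) (v : ℕ → M) : Prop :=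
  v 1 = (1 + β) • T (v 0) - β • v 0 ∧
    ∀ t, v (t + 2) = (1 + β) • T (v (t + 1)) - β • T (v t)

theorem isAccelOrbit_of_momentum {T : M → M} {β : ℝ} {x y : ℕ → M} (hy0 : y 0 = x 0)
    (hy : ∀ t, y (t + 1) = T (x t))
    (hx : ∀ t, x (t + 1) = y (t + 1) + β • (y (t + 1) - y t)) :
    IsAccelOrbit T β x := by
  refine ⟨?_, fun t => ?_⟩
  · rw [hx, hy, hy0, smul_sub, add_smul, one_smul]; abel
  · rw [hx, hy, hy, smul_sub, add_smul, one_smul]; abel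

theorem IsAccelOrbit.sub_fixedPoint {T : M →ₗ[ℝ] M} {β : ℝ} {v : ℕ → M}
    (hv : IsAccelOrbit T β v) {c : M} (hc : T c = c) :
    IsAccelOrbit T β (fun t => v t - c) := by
  refine ⟨?_, fun t => ?_⟩
  · simp only [map_sub, hc, hv.1, smul_sub, add_smul, one_smul]; abel
  · simp only [map_sub, hc, hv.2 t, smul_sub, add_smul, one_smul]; abel

theorem IsAccelOrbit.map {N : Type*} [AddCommGroup N] [Module ℝ N] {T : M → M} {S : N → N}
    {β : ℝ} {v : ℕ → M} (hv : IsAccelOrbit T β v) (f : M →ₗ[ℝ] N)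
    (hf : ∀ z, f (T z) = S (f z)) : IsAccelOrbit S β (fun t => f (v t)) :=
  ⟨by simp only [hv.1, map_sub, map_smul, hf],
    fun t => by simp only [hv.2 t, map_sub, map_smul, hf]⟩

theorem IsAccelOrbit.mem {T : M →ₗ[ℝ] M} {β : ℝ} {v : ℕ → M} (hv : IsAccelOrbit T β v)
    {K : Submodule ℝ M} (hK : ∀ z ∈ K, T z ∈ K) (h0 : v 0 ∈ K) (t : ℕ) : v t ∈ K := by
  suffices ∀ t, v t ∈ K ∧ v (t + 1) ∈ K from (this t).1
  intro t
  induction t with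
  | zero => exact ⟨h0, hv.1 ▸ K.sub_mem (K.smul_mem _ (hK _ h0)) (K.smul_mem _ h0)⟩
  | succ t ih =>
    exact ⟨ih.2, hv.2 t ▸ K.sub_mem (K.smul_mem _ (hK _ ih.2)) (K.smul_mem _ (hK _ ih.1))⟩

theorem IsAccelOrbit.restrict {T : M →ₗ[ℝ] M} {β : ℝ} {v : ℕ → M} (hv : IsAccelOrbit T β v)
    {K : Submodule ℝ M} (hK : ∀ z ∈ K, T z ∈ K) (h0 : v 0 ∈ K) :
    IsAccelOrbit (T.restrict hK) β (fun t => ⟨v t, hv.mem hK h0 t⟩) :=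
  ⟨Subtype.ext hv.1, fun t => Subtype.ext (hv.2 t)⟩

end AccelOrbit

/-- The quadratic form `y² - a x y + b x²` gets multiplied by `b` at each step of the
recurrence, and it dominates `(b - a² / 4) x²`. -/
theorem sq_le_of_two_step_rec {a b : ℝ} {u : ℕ → ℝ}
    (h : ∀ t, u (t + 2) = a * u (t + 1) - b * u t) (t : ℕ) :
    (4 * b - a ^ 2) * u t ^ 2 ≤ 4 * b ^ t * (u 1 ^ 2 - a * u 0 * u 1 + b * u 0 ^ 2) := by
  have energy : ∀ t, u (t + 1) ^ 2 - a * u t * u (t + 1) + b * u t ^ 2 =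
      b ^ t * (u 1 ^ 2 - a * u 0 * u 1 + b * u 0 ^ 2) := by
    intro t
    induction t with
    | zero => ring
    | succ t ih => rw [h]; linear_combination b * ih
  nlinarith [energy t, sq_nonneg (2 * u (t + 1) - a * u t)]

theorem IsAccelOrbit.mul_sq_le {β μ : ℝ} {u : ℕ → ℝ} (hu : IsAccelOrbit (μ * ·) β u) (t : ℕ) :
    μ * (4 * β - (1 + β) ^ 2 * μ) * u t ^ 2 ≤ 4 * β ^ (t + 2) * μ ^ t * (1 - μ) * u 0 ^ 2 := by
  have h := sq_le_of_two_step_rec (a := (1 + β) * μ) (b := β * μ) (u := u)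
    (fun t => by simp only [hu.2 t, smul_eq_mul]; ring) t
  have h1 : u 1 = ((1 + β) * μ - β) * u 0 := by simp only [hu.1, smul_eq_mul]; ring
  rw [h1] at h
  convert h using 1 <;> ring

theorem IsAccelOrbit.sq_le_of_le_half {β μ : ℝ} (hβ : 4 / 5 ≤ β) (hβ1 : β ≤ 1) (hμ0 : 0 < μ)
    (hμ : μ ≤ 1 / 2) {u : ℕ → ℝ} (hu : IsAccelOrbit (μ * ·) β u) (s : ℕ) :
    u (s + 1) ^ 2 ≤ 8 * (1 / 2) ^ (s + 1) * u 0 ^ 2 := by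
  have hX : 6 / 5 ≤ 4 * β - (1 + β) ^ 2 * μ := by nlinarith
  have hβs : β ^ (s + 1 + 2) ≤ 1 := pow_le_one₀ (by linarith) hβ1
  have : (4 * β - (1 + β) ^ 2 * μ) * u (s + 1) ^ 2 ≤ 4 * (1 / 2) ^ s * u 0 ^ 2 := by
    refine le_of_mul_le_mul_left ?_ hμ0
    calc μ * ((4 * β - (1 + β) ^ 2 * μ) * u (s + 1) ^ 2)
        ≤ μ * (4 * β ^ (s + 1 + 2) * μ ^ s * (1 - μ) * u 0 ^ 2) := by
          convert hu.mul_sq_le (s + 1) using 1 <;> ring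
      _ ≤ μ * (4 * 1 * (1 / 2) ^ s * 1 * u 0 ^ 2) := by gcongr <;> linarith
      _ = _ := by ring
  have h8 : 8 * (1 / 2 : ℝ) ^ (s + 1) = 4 * (1 / 2) ^ s := by ring
  nlinarith [pow_nonneg (by norm_num : (0 : ℝ) ≤ 1 / 2) s, sq_nonneg (u (s + 1)), sq_nonneg (u 0)]

theorem IsAccelOrbit.sq_le_of_half_lt {β α μ : ℝ} (hβ : 4 / 5 ≤ β) (hβ1 : β ≤ 1) (hα : 0 < α)
    (hend : 4 * β ^ 2 * α ≤ 3 * (1 - α) * (4 * β - (1 + β) ^ 2 * (1 - α))) (hμ : 1 / 2 < μ)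
    (hμ1 : μ ≤ 1 - α) {u : ℕ → ℝ} (hu : IsAccelOrbit (μ * ·) β u) (t : ℕ) :
    u t ^ 2 ≤ 3 * (β * μ) ^ t * u 0 ^ 2 := by
  -- the difference of the two sides is concave in `μ` and nonnegative at `1/2` and at `1 - α`
  have hconc : 4 * β ^ 2 * (1 - μ) ≤ 3 * μ * (4 * β - (1 + β) ^ 2 * μ) := by
    have hhalf : 4 * β ^ 2 * (1 - 1 / 2) ≤ 3 * (1 / 2) * (4 * β - (1 + β) ^ 2 * (1 / 2)) := by
      nlinarith
    have h1 := mul_le_mul_of_nonneg_left hhalf (sub_nonneg.2 hμ1)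
    have h2 := mul_le_mul_of_nonneg_left hend (sub_nonneg.2 hμ.le)
    have h3 := mul_nonneg (mul_nonneg (sub_nonneg.2 hμ.le) (sub_nonneg.2 hμ1)) (sq_nonneg (1 + β))
    refine le_of_mul_le_mul_left ?_ (by linarith : (0 : ℝ) < 1 - α - 1 / 2)
    nlinarith
  have hX : 0 < μ * (4 * β - (1 + β) ^ 2 * μ) := by
    nlinarith [mul_pos (pow_pos (by linarith : (0 : ℝ) < β) 2) (by linarith : 0 < 1 - μ)]
  refine le_of_mul_le_mul_left ?_ hX
  calc μ * (4 * β - (1 + β) ^ 2 * μ) * u t ^ 2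
      ≤ (β * μ) ^ t * u 0 ^ 2 * (4 * β ^ 2 * (1 - μ)) := by
        convert hu.mul_sq_le t using 1; ring
    _ ≤ (β * μ) ^ t * u 0 ^ 2 * (3 * μ * (4 * β - (1 + β) ^ 2 * μ)) := by
        have : 0 ≤ β * μ := by nlinarith
        gcongr
    _ = _ := by ring

theorem IsAccelOrbit.sq_le_of_mem_Icc {β α μ : ℝ} (hβ : 4 / 5 ≤ β) (hβ1 : β ≤ 1) (hα : 0 < α)
    (hend : 4 * β ^ 2 * α ≤ 3 * (1 - α) * (4 * β - (1 + β) ^ 2 * (1 - α)))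
    (hμ : μ ∈ Set.Icc 0 (1 - α)) {u : ℕ → ℝ} (hu : IsAccelOrbit (μ * ·) β u) {t : ℕ}
    (ht : 2 ≤ t) : u t ^ 2 ≤ (8 * (1 / 2) ^ t + 3 * (β * (1 - α)) ^ t) * u 0 ^ 2 := by
  obtain ⟨hμ0, hμ1⟩ := hμ
  obtain ⟨s, rfl⟩ : ∃ s, t = s + 2 := ⟨t - 2, by omega⟩
  have hq : 0 ≤ β * (1 - α) := by nlinarith
  have h8 : 0 ≤ 8 * (1 / 2 : ℝ) ^ (s + 2) * u 0 ^ 2 := by positivity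
  have h3 : 0 ≤ 3 * (β * (1 - α)) ^ (s + 2) * u 0 ^ 2 := by positivity
  rcases hμ0.eq_or_lt with rfl | hμ0
  · have : u (s + 2) = 0 := by simp [hu.2 s]
    rw [this]
    nlinarith
  rcases le_or_gt μ (1 / 2) with hsmall | hlarge
  · nlinarith [hu.sq_le_of_le_half hβ hβ1 hμ0 hsmall (s + 1)]
  · have hdecay := hu.sq_le_of_half_lt hβ hβ1 hα hend hlarge hμ1 (s + 2)
    have hmono : (β * μ) ^ (s + 2) ≤ (β * (1 - α)) ^ (s + 2) := by gcongr
    nlinarith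

theorem pow_le_inv_sq_of_two_log_le {r s : ℝ} {t : ℕ} (hr : 0 ≤ r) (hs : 0 < s)
    (h : 2 * log s ≤ (1 - r) * t) : r ^ t ≤ (s ^ 2)⁻¹ :=
  calc r ^ t ≤ exp (r - 1) ^ t := by gcongr; linarith [add_one_le_exp (r - 1)]
    _ = exp (-((1 - r) * t)) := by rw [← exp_nat_mul]; ring_nf
    _ ≤ exp (-log (s ^ 2)) := exp_le_exp.2 (by rw [log_pow]; push_cast; linarith)
    _ = (s ^ 2)⁻¹ := by rw [exp_neg, exp_log (by positivity)]

theorem two_term_decay_le {U ε q : ℝ} {t : ℕ} (hU : 1 ≤ U) (hε0 : 0 < ε) (hε : ε ≤ 18)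
    (hq0 : 0 ≤ q) (hq : 2 ≤ 9 * U * (1 - q)) (ht : 9 * U * log (18 / ε) ≤ t) :
    8 * (1 / 2) ^ t + 3 * q ^ t ≤ ε := by
  have hL : 0 ≤ log (18 / ε) := log_nonneg (by rw [le_div_iff₀ hε0]; linarith)
  have h18 : 0 < 18 / ε := by positivity
  have hhalf : (1 / 2 : ℝ) ^ t ≤ ((18 / ε) ^ 2)⁻¹ :=
    pow_le_inv_sq_of_two_log_le (by norm_num) h18 (by nlinarith)
  have hqt : q ^ t ≤ ((18 / ε) ^ 2)⁻¹ :=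
    pow_le_inv_sq_of_two_log_le hq0 h18
      (by nlinarith [mul_le_mul_of_nonneg_left ht (by nlinarith : 0 ≤ 1 - q)])
  have : ((18 / ε) ^ 2)⁻¹ = ε ^ 2 / 324 := by field_simp; norm_num
  rw [this] at hhalf hqt
  nlinarith

theorem accel_parameter_bounds {U β α : ℝ} (hU : 1 ≤ U) (hβ : β = 1 - 2 / (9 * U + 1))
    (hα : α = 1 / (24 * U ^ 2)) :
    4 / 5 ≤ β ∧ β ≤ 1 ∧ 0 < α ∧ α ≤ 1 / 24 ∧
      4 * β ^ 2 * α ≤ 3 * (1 - α) * (4 * β - (1 + β) ^ 2 * (1 - α)) ∧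
      2 ≤ 9 * U * (1 - β * (1 - α)) := by
  obtain ⟨δ, hδ, rfl⟩ : ∃ δ, δ * (9 * U + 1) = 2 ∧ β = 1 - δ :=
    ⟨2 / (9 * U + 1), by field_simp, hβ⟩
  have hαU : α * (24 * U ^ 2) = 1 := by rw [hα]; field_simp
  have hδ0 : 0 < δ := by nlinarith
  have hδ5 : δ ≤ 1 / 5 := by nlinarith
  have hα0 : 0 < α := by rw [hα]; positivity
  have hα24 : α ≤ 1 / 24 := by nlinarith [one_le_pow₀ (n := 2) hU]
  -- `δ² ≤ 4 / (81 U²)` and `α = 1 / (24 U²)`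
  have hδα : 81 * δ ^ 2 ≤ 96 * α := by
    have : (9 * U * δ) ^ 2 ≤ 4 := by nlinarith
    nlinarith
  refine ⟨by linarith, by linarith, hα0, hα24, ?_, ?_⟩
  · have h1 : 2 * α ≤ 4 * (1 - δ) - (1 + (1 - δ)) ^ 2 * (1 - α) := by nlinarith
    nlinarith [mul_le_mul_of_nonneg_left h1 (by linarith : (0 : ℝ) ≤ 3 * (1 - α))]
  · have h1 : δ * U ≤ 2 / 9 := by nlinarith
    nlinarith

/-- In an orthonormal eigenbasis of `T`, every coordinate of `v` is a scalar orbit for the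
corresponding eigenvalue. -/
theorem IsAccelOrbit.norm_sq_le {E : Type*} [NormedAddCommGroup E] [InnerProductSpace ℝ E]
    [FiniteDimensional ℝ E] {T : E →ₗ[ℝ] E} (hT : T.IsSymmetric) {lam β c : ℝ} {t : ℕ}
    (hpos : ∀ z, 0 ≤ ⟪z, T z⟫) (hle : ∀ z, ⟪z, T z⟫ ≤ lam * ‖z‖ ^ 2)
    (hc : ∀ μ ∈ Set.Icc 0 lam, ∀ u : ℕ → ℝ, IsAccelOrbit (μ * ·) β u → u t ^ 2 ≤ c * u 0 ^ 2)
    {v : ℕ → E} (hv : IsAccelOrbit T β v) : ‖v t‖ ^ 2 ≤ c * ‖v 0‖ ^ 2 := by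
  set b := hT.eigenvectorBasis rfl
  set μ := hT.eigenvalues rfl
  have hTb : ∀ k, T (b k) = μ k • b k := hT.apply_eigenvectorBasis rfl
  have hμ : ∀ k, μ k ∈ Set.Icc 0 lam := by
    intro k
    have hk : ⟪b k, T (b k)⟫ = μ k := by
      rw [hTb, real_inner_smul_right, real_inner_self_eq_norm_sq, b.orthonormal.1 k]; ring
    have := hle (b k)
    rw [hk, b.orthonormal.1 k] at this
    exact ⟨hk ▸ hpos (b k), by simpa using this⟩
  have hcoord : ∀ k, IsAccelOrbit (μ k * ·) β (fun s => ⟪b k, v s⟫) :=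
    fun k => hv.map (innerₗ E (b k)) fun z => by
      rw [innerₗ_apply_apply, innerₗ_apply_apply, ← hT, hTb, real_inner_smul_left]
  rw [← b.sum_sq_inner_right, ← b.sum_sq_inner_right, mul_sum]
  exact sum_le_sum fun k _ => hc _ (hμ k) _ (hcoord k)

theorem Finset.card_le_of_forall_le_add {S : Finset ℕ} {k : ℕ} (h : ∀ x ∈ S, ∀ y ∈ S, y ≤ x + k) :
    #S ≤ k + 1 := by
  rcases S.eq_empty_or_nonempty with rfl | hS
  · simp
  calc #S ≤ #(Icc (S.min' hS) (S.min' hS + k)) :=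
        card_le_card fun y hy => mem_Icc.2 ⟨S.min'_le y hy, h _ (S.min'_mem hS) y hy⟩
    _ = k + 1 := by rw [Nat.card_Icc]; omega

theorem sum_sq_le_card_mul_sq_sub {ι : Type*} [Fintype ι] {z : ι → ℝ} (hz : ∑ i, z i = 0)
    {a b : ι} (ha : ∀ i, z i ≤ z a) (hb : ∀ i, z b ≤ z i) :
    ∑ i, z i ^ 2 ≤ Fintype.card ι * (z a - z b) ^ 2 := by
  have hne : (univ : Finset ι).Nonempty := ⟨a, mem_univ a⟩
  obtain ⟨i, -, hi⟩ := exists_le_of_sum_le hne (f := z) (g := fun _ => 0) (by simp [hz])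
  obtain ⟨j, -, hj⟩ := exists_le_of_sum_le hne (f := fun _ => 0) (g := z) (by simp [hz])
  calc ∑ i, z i ^ 2 ≤ ∑ _i : ι, (z a - z b) ^ 2 := by
        refine sum_le_sum fun k _ => ?_
        nlinarith [ha k, hb k, ha j, hb i]
    _ = _ := by simp

theorem EuclideanSpace.real_inner_eq_sum {V : Type*} [Fintype V] (u z : EuclideanSpace ℝ V) :
    ⟪u, z⟫ = ∑ i, u i * z i := by
  simp only [PiLp.inner_apply, RCLike.inner_apply, conj_trivial, mul_comm]

namespace SimpleGraph

variable {V : Type*} {G : SimpleGraph V}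

theorem Walk.dist_getVert_of_length_eq_dist {u v : V} {p : G.Walk u v}
    (hp : p.length = G.dist u v) {i : ℕ} (hi : i ≤ p.length) : G.dist u (p.getVert i) = i := by
  have := length_eq_dist_of_subwalk hp (p.isSubwalk_take i)
  rw [Walk.take_length, min_eq_left hi] at this
  exact this.symm

theorem dist_le_one_of_eq_or_adj {u v : V} (h : u = v ∨ G.Adj u v) : G.dist u v ≤ 1 := by
  rcases h with rfl | h
  · simp
  · exact (dist_eq_one_iff_adj.2 h).le

/-- A common neighbour of two far apart vertices of a geodesic would give a shortcut. -/
theorem Connected.le_add_two_of_geodesic (hG : G.Connected) {u v w : V} {p : G.Walk u v}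
    (hp : p.length = G.dist u v) {i j : ℕ} (hi : i ≤ p.length) (hj : j ≤ p.length)
    (hwi : p.getVert i = w ∨ G.Adj (p.getVert i) w)
    (hwj : p.getVert j = w ∨ G.Adj (p.getVert j) w) : j ≤ i + 2 := by
  have h1 := dist_le_one_of_eq_or_adj hwi
  have h2 := dist_le_one_of_eq_or_adj hwj
  rw [dist_comm] at h2
  have t1 := hG.dist_triangle (u := u) (v := p.getVert i) (w := p.getVert j)
  have t2 := hG.dist_triangle (u := p.getVert i) (v := w) (w := p.getVert j)
  rw [p.dist_getVert_of_length_eq_dist hp hi, p.dist_getVert_of_length_eq_dist hp hj] at t1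
  omega

theorem reachable_fromRel_of_reflTransGen {r : V → V → Prop} {u v : V}
    (h : Relation.ReflTransGen r u v) : (fromRel r).Reachable u v := by
  induction h with
  | refl => rfl
  | @tail b c _ hbc ih =>
    refine ih.trans ?_
    by_cases hb : b = c
    · rw [hb]
    · exact Adj.reachable ⟨hb, Or.inl hbc⟩

variable [Fintype V]

theorem neighborFinset_fromRel [DecidableEq V] {r : V → V → Prop} [DecidableRel r]
    [DecidableRel (fromRel r).Adj] (hr : ∀ i j, r i j → r j i) (i : V) :
    (fromRel r).neighborFinset i = univ.filter fun j => j ≠ i ∧ r i j := by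
  ext j
  simp only [mem_neighborFinset, fromRel_adj, mem_filter, mem_univ, true_and]
  exact ⟨fun ⟨hij, h⟩ => ⟨Ne.symm hij, h.elim id (hr j i)⟩,
    fun ⟨hji, h⟩ => ⟨Ne.symm hji, Or.inl h⟩⟩

theorem Connected.sum_degree_getVert_le [DecidableRel G.Adj] (hG : G.Connected) {u v : V}
    {p : G.Walk u v} (hp : p.length = G.dist u v) :
    ∑ x ∈ range (p.length + 1), (G.degree (p.getVert x) + 1) ≤ 3 * Fintype.card V := by
  classical
  set r : ℕ → V → Prop := fun x w => p.getVert x = w ∨ G.Adj (p.getVert x) w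
  have hfiber : ∀ x, univ.bipartiteAbove r x =
      insert (p.getVert x) (G.neighborFinset (p.getVert x)) := by
    intro x
    ext w
    simp [bipartiteAbove, r, eq_comm]
  -- each vertex lies in at most three of the closed neighbourhoods along `p`
  calc ∑ x ∈ range (p.length + 1), (G.degree (p.getVert x) + 1)
      = ∑ x ∈ range (p.length + 1), #(univ.bipartiteAbove r x) := by
        refine sum_congr rfl fun x _ => ?_
        rw [hfiber, card_insert_of_notMem (G.notMem_neighborFinset_self _),
          card_neighborFinset_eq_degree]
    _ = ∑ w, #((range (p.length + 1)).bipartiteBelow r w) :=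
        sum_card_bipartiteAbove_eq_sum_card_bipartiteBelow r
    _ ≤ ∑ _w : V, 3 := by
        refine sum_le_sum fun w _ => card_le_of_forall_le_add fun x hx y hy => ?_
        simp only [bipartiteBelow, mem_filter, mem_range] at hx hy
        exact hG.le_add_two_of_geodesic hp (by omega) (by omega) hx.2 hy.2
    _ = 3 * Fintype.card V := by simp [mul_comm]

variable (G) [DecidableRel G.Adj]

/-- The reciprocal `2 max(d(i), d(j))` of the lazy Metropolis weight of an edge `ij`. -/
noncomputable def metropolisDenom (i j : V) : ℝ := 2 * max (G.degree i : ℝ) (G.degree j)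

noncomputable def lazyMetropolis : EuclideanSpace ℝ V →ₗ[ℝ] EuclideanSpace ℝ V where
  toFun z := WithLp.toLp 2 fun i =>
    z i + ∑ j ∈ G.neighborFinset i, (z j - z i) / G.metropolisDenom i j
  map_add' x y := by
    ext i
    simp only [PiLp.add_apply, add_sub_add_comm, add_div, sum_add_distrib]
    ring
  map_smul' c x := by
    ext i
    simp only [PiLp.smul_apply, smul_eq_mul, RingHom.id_apply, mul_sum, ← mul_sub, mul_div_assoc,
      mul_add]

/-- The Dirichlet form of the Metropolis weights; every edge is counted in both directions. -/
noncomputable def metropolisForm (u z : V → ℝ) : ℝ :=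
  ∑ i, ∑ j ∈ G.neighborFinset i, (u i - u j) * (z i - z j) / G.metropolisDenom i j

variable {G}

theorem lazyMetropolis_apply (z : EuclideanSpace ℝ V) (i : V) :
    G.lazyMetropolis z i = z i + ∑ j ∈ G.neighborFinset i, (z j - z i) / G.metropolisDenom i j :=
  rfl

theorem lazyMetropolis_const (c : ℝ) :
    G.lazyMetropolis (WithLp.toLp 2 fun _ => c) = WithLp.toLp 2 fun _ => c := by
  ext i
  simp [lazyMetropolis_apply]

theorem metropolisDenom_comm (i j : V) : G.metropolisDenom i j = G.metropolisDenom j i := by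
  rw [metropolisDenom, metropolisDenom, max_comm]

theorem metropolisDenom_nonneg (i j : V) : 0 ≤ G.metropolisDenom i j := by
  unfold metropolisDenom
  positivity

theorem metropolisDenom_pos {i j : V} (h : G.Adj i j) : 0 < G.metropolisDenom i j := by
  have : 0 < G.degree i := G.degree_pos_iff_exists_adj i |>.2 ⟨j, h⟩
  unfold metropolisDenom
  positivity

theorem sum_neighborFinset_comm (f : V → V → ℝ) :
    ∑ i, ∑ j ∈ G.neighborFinset i, f i j = ∑ i, ∑ j ∈ G.neighborFinset i, f j i := by
  simp only [neighborFinset_eq_filter, sum_filter]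
  rw [sum_comm]
  simp only [G.adj_comm]

theorem sum_mul_sum_neighborFinset {m : V → V → ℝ} (hm : ∀ i j, m i j = m j i) (u z : V → ℝ) :
    ∑ i, u i * ∑ j ∈ G.neighborFinset i, (z j - z i) / m i j =
      -(∑ i, ∑ j ∈ G.neighborFinset i, (u i - u j) * (z i - z j) / m i j) / 2 := by
  have h1 : ∑ i, u i * ∑ j ∈ G.neighborFinset i, (z j - z i) / m i j =
      ∑ i, ∑ j ∈ G.neighborFinset i, u i * (z j - z i) / m i j := by
    simp only [mul_sum, mul_div_assoc]
  have h2 : ∑ i, ∑ j ∈ G.neighborFinset i, u i * (z j - z i) / m i j =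
      ∑ i, ∑ j ∈ G.neighborFinset i, u j * (z i - z j) / m i j := by
    rw [G.sum_neighborFinset_comm]
    exact sum_congr rfl fun i _ => sum_congr rfl fun j _ => by rw [hm]
  have h3 : ∑ i, ∑ j ∈ G.neighborFinset i, u i * (z j - z i) / m i j +
      ∑ i, ∑ j ∈ G.neighborFinset i, u j * (z i - z j) / m i j =
      -∑ i, ∑ j ∈ G.neighborFinset i, (u i - u j) * (z i - z j) / m i j := by
    simp only [← sum_add_distrib, ← sum_neg_distrib]
    exact sum_congr rfl fun i _ => sum_congr rfl fun j _ => by ring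
  linarith

theorem inner_lazyMetropolis (u z : EuclideanSpace ℝ V) :
    ⟪u, G.lazyMetropolis z⟫ = ⟪u, z⟫ - G.metropolisForm u z / 2 := by
  simp only [EuclideanSpace.real_inner_eq_sum, lazyMetropolis_apply, mul_add, sum_add_distrib,
    sum_mul_sum_neighborFinset metropolisDenom_comm, metropolisForm]
  ring

theorem metropolisForm_comm (u z : V → ℝ) : G.metropolisForm u z = G.metropolisForm z u :=
  sum_congr rfl fun i _ => sum_congr rfl fun j _ => by ring

theorem lazyMetropolis_isSymmetric : G.lazyMetropolis.IsSymmetric := fun u z => by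
  rw [real_inner_comm, inner_lazyMetropolis, inner_lazyMetropolis, real_inner_comm,
    metropolisForm_comm]

theorem sum_lazyMetropolis (z : EuclideanSpace ℝ V) :
    ∑ i, G.lazyMetropolis z i = ∑ i, z i := by
  have := sum_mul_sum_neighborFinset (G := G) (metropolisDenom_comm (G := G)) (fun _ => 1) z
  simp only [one_mul, sub_self, zero_mul, zero_div, sum_const_zero, neg_zero] at this
  simp only [lazyMetropolis_apply, sum_add_distrib, this, add_zero]

theorem sum_inv_metropolisDenom_le (i : V) :
    ∑ j ∈ G.neighborFinset i, (G.metropolisDenom i j)⁻¹ ≤ 1 / 2 := by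
  rcases (G.degree i).eq_zero_or_pos with h | h
  · rw [← card_neighborFinset_eq_degree, card_eq_zero] at h
    simp [h]
  calc ∑ j ∈ G.neighborFinset i, (G.metropolisDenom i j)⁻¹
      ≤ ∑ j ∈ G.neighborFinset i, (2 * (G.degree i : ℝ))⁻¹ :=
        sum_le_sum fun j _ => inv_anti₀ (by positivity) <| by
          unfold metropolisDenom
          gcongr
          exact le_max_left _ _
    _ = 1 / 2 := by
        rw [sum_const, card_neighborFinset_eq_degree, nsmul_eq_mul]
        field_simp

theorem metropolisForm_self_le (z : V → ℝ) : G.metropolisForm z z ≤ 2 * ∑ i, z i ^ 2 := by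
  have hswap : ∑ i, ∑ j ∈ G.neighborFinset i, z j ^ 2 / G.metropolisDenom i j =
      ∑ i, ∑ j ∈ G.neighborFinset i, z i ^ 2 / G.metropolisDenom i j := by
    rw [G.sum_neighborFinset_comm]
    exact sum_congr rfl fun i _ => sum_congr rfl fun j _ => by rw [metropolisDenom_comm]
  have hrow : ∑ i, ∑ j ∈ G.neighborFinset i, z i ^ 2 / G.metropolisDenom i j ≤
      1 / 2 * ∑ i, z i ^ 2 := by
    rw [mul_sum]
    refine sum_le_sum fun i _ => ?_
    simp only [div_eq_mul_inv, ← mul_sum]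
    nlinarith [sum_inv_metropolisDenom_le (G := G) i, sq_nonneg (z i)]
  calc G.metropolisForm z z
      ≤ ∑ i, ∑ j ∈ G.neighborFinset i, (2 * z i ^ 2 + 2 * z j ^ 2) / G.metropolisDenom i j :=
        sum_le_sum fun i _ => sum_le_sum fun j _ =>
          div_le_div_of_nonneg_right (by nlinarith [sq_nonneg (z i + z j)])
            (metropolisDenom_nonneg i j)
    _ = 2 * ∑ i, ∑ j ∈ G.neighborFinset i, z i ^ 2 / G.metropolisDenom i j +
          2 * ∑ i, ∑ j ∈ G.neighborFinset i, z j ^ 2 / G.metropolisDenom i j := by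
        simp only [mul_sum, ← sum_add_distrib, add_div, mul_div_assoc]
    _ ≤ 2 * ∑ i, z i ^ 2 := by linarith

theorem inner_lazyMetropolis_self_nonneg (z : EuclideanSpace ℝ V) :
    0 ≤ ⟪z, G.lazyMetropolis z⟫ := by
  rw [inner_lazyMetropolis, real_inner_self_eq_norm_sq, EuclideanSpace.norm_sq_eq]
  simp only [Real.norm_eq_abs, sq_abs]
  linarith [metropolisForm_self_le (G := G) z]


theorem metropolisForm_self (z : V → ℝ) :
    G.metropolisForm z z = ∑ i, ∑ j ∈ G.neighborFinset i, (z i - z j) ^ 2 / G.metropolisDenom i j :=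
  sum_congr rfl fun i _ => sum_congr rfl fun j _ => by ring

theorem Connected.sum_metropolisDenom_le (hG : G.Connected) {u v : V} {p : G.Walk u v}
    (hp : p.length = G.dist u v) :
    ∑ x ∈ range p.length, G.metropolisDenom (p.getVert x) (p.getVert (x + 1)) ≤
      12 * Fintype.card V := by
  have hdeg := hG.sum_degree_getVert_le hp
  rw [sum_add_distrib, sum_const, card_range, smul_eq_mul, mul_one] at hdeg
  have h1 := sum_range_succ (fun x => G.degree (p.getVert x)) p.length
  have h2 := sum_range_succ' (fun x => G.degree (p.getVert x)) p.length
  have hD : ((∑ x ∈ range p.length, G.degree (p.getVert x) +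
      ∑ x ∈ range p.length, G.degree (p.getVert (x + 1)) : ℕ) : ℝ) ≤ 6 * Fintype.card V := by
    exact_mod_cast (by omega : _ ≤ 6 * Fintype.card V)
  push_cast at hD
  calc ∑ x ∈ range p.length, G.metropolisDenom (p.getVert x) (p.getVert (x + 1))
      ≤ ∑ x ∈ range p.length, 2 * ((G.degree (p.getVert x) : ℝ) + G.degree (p.getVert (x + 1))) :=
        sum_le_sum fun x _ => by
          unfold metropolisDenom
          gcongr
          exact max_le_add_of_nonneg (by positivity) (by positivity)
    _ ≤ 12 * Fintype.card V := by
        rw [← mul_sum, sum_add_distrib]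
        linarith

theorem Walk.sq_sub_le_sum_mul_sum {u v : V} (p : G.Walk u v) (z : V → ℝ) :
    (z v - z u) ^ 2 ≤
      (∑ x ∈ range p.length, G.metropolisDenom (p.getVert x) (p.getVert (x + 1))) *
        ∑ x ∈ range p.length, (z (p.getVert x) - z (p.getVert (x + 1))) ^ 2 /
          G.metropolisDenom (p.getVert x) (p.getVert (x + 1)) := by
  have htel : z v - z u = ∑ x ∈ range p.length, (z (p.getVert (x + 1)) - z (p.getVert x)) := by
    rw [sum_range_sub (fun x => z (p.getVert x)), p.getVert_length, p.getVert_zero]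
  rw [htel]
  refine sum_sq_le_sum_mul_sum_of_sq_le_mul _ (fun x _ => metropolisDenom_nonneg _ _)
    (fun x _ => div_nonneg (sq_nonneg _) (metropolisDenom_nonneg _ _)) fun x hx => ?_
  rw [mul_div_cancel₀ _ (metropolisDenom_pos (p.adj_getVert_succ (mem_range.1 hx))).ne',
    ← neg_sub, neg_sq]

theorem Walk.IsPath.sum_getVert_le {u v : V} {p : G.Walk u v} (hp : p.IsPath) {f : V → V → ℝ}
    (hf : ∀ i j, 0 ≤ f i j) :
    ∑ x ∈ range p.length, f (p.getVert x) (p.getVert (x + 1)) ≤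
      ∑ i, ∑ j ∈ G.neighborFinset i, f i j := by
  classical
  have hinj : Set.InjOn (fun x => (⟨p.getVert x, p.getVert (x + 1)⟩ : Σ _ : V, V))
      (range p.length) := fun x hx y hy hxy => by
    simp only [coe_range, Set.mem_Iio] at hx hy
    exact hp.getVert_injOn (by simp only [Set.mem_ofPred_eq]; omega)
      (by simp only [Set.mem_ofPred_eq]; omega) (congrArg Sigma.fst hxy)
  rw [sum_sigma', ← sum_image (f := fun q => f q.1 q.2) hinj]
  refine sum_le_sum_of_subset_of_nonneg ?_ fun q _ _ => hf _ _
  intro q hq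
  obtain ⟨x, hx, rfl⟩ := mem_image.1 hq
  simpa using p.adj_getVert_succ (mem_range.1 hx)

theorem Connected.sum_sq_le_metropolisForm (hG : G.Connected) {z : V → ℝ} (hz : ∑ i, z i = 0) :
    ∑ i, z i ^ 2 ≤ 12 * (Fintype.card V : ℝ) ^ 2 * G.metropolisForm z z := by
  have := hG.nonempty
  obtain ⟨a, -, ha⟩ := exists_max_image univ z univ_nonempty
  obtain ⟨b, -, hb⟩ := exists_min_image univ z univ_nonempty
  obtain ⟨p, hp⟩ := hG.exists_walk_length_eq_dist b a
  have hpath : (z a - z b) ^ 2 ≤ 12 * Fintype.card V * G.metropolisForm z z := by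
    rw [metropolisForm_self]
    refine (p.sq_sub_le_sum_mul_sum z).trans (mul_le_mul (hG.sum_metropolisDenom_le hp)
      ((p.isPath_of_length_eq_dist hp).sum_getVert_le
        (f := fun i j => (z i - z j) ^ 2 / G.metropolisDenom i j) fun i j => ?_)
      (sum_nonneg fun x _ => ?_) (by positivity))
    all_goals exact div_nonneg (sq_nonneg _) (metropolisDenom_nonneg _ _)
  calc ∑ i, z i ^ 2 ≤ Fintype.card V * (z a - z b) ^ 2 :=
        sum_sq_le_card_mul_sq_sub hz (fun i => ha i (mem_univ i)) fun i => hb i (mem_univ i)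
    _ ≤ Fintype.card V * (12 * Fintype.card V * G.metropolisForm z z) := by gcongr
    _ = _ := by ring

theorem Connected.inner_lazyMetropolis_self_le (hG : G.Connected) {z : EuclideanSpace ℝ V}
    (hz : ∑ i, z i = 0) :
    ⟪z, G.lazyMetropolis z⟫ ≤ (1 - 1 / (24 * (Fintype.card V : ℝ) ^ 2)) * ‖z‖ ^ 2 := by
  have hn : (0 : ℝ) < Fintype.card V := by have := hG.nonempty; exact_mod_cast Fintype.card_pos
  have hP := hG.sum_sq_le_metropolisForm hz
  rw [inner_lazyMetropolis, real_inner_self_eq_norm_sq, EuclideanSpace.norm_sq_eq]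
  simp only [Real.norm_eq_abs, sq_abs] at hP ⊢
  have : (∑ i, z i ^ 2) / (24 * (Fintype.card V : ℝ) ^ 2) ≤ G.metropolisForm z z / 2 := by
    rw [div_le_iff₀ (by positivity)]
    linarith
  linarith [div_eq_mul_one_div (∑ i, z i ^ 2) (24 * (Fintype.card V : ℝ) ^ 2)]

variable (V) in
def sumZero : Submodule ℝ (EuclideanSpace ℝ V) where
  carrier := {z | ∑ i, z i = 0}
  add_mem' hx hy := by simp_all [sum_add_distrib]
  zero_mem' := by simp
  smul_mem' c x hx := by simp_all [← mul_sum]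

theorem Connected.accel_lazyMetropolis_norm_sq_le (hG : G.Connected) {U : ℝ}
    (hU : (Fintype.card V : ℝ) ≤ U) {v : ℕ → EuclideanSpace ℝ V}
    (hv : IsAccelOrbit G.lazyMetropolis (1 - 2 / (9 * U + 1)) v) (hv0 : ∑ i, v 0 i = 0)
    {ε : ℝ} (hε0 : 0 < ε) (hε1 : ε < 1) {t : ℕ} (ht : 9 * U * log (18 / ε) ≤ t) :
    ‖v t‖ ^ 2 ≤ ε * ‖v 0‖ ^ 2 := by
  set β := 1 - 2 / (9 * U + 1)
  set α := 1 / (24 * U ^ 2)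
  have hn : (1 : ℝ) ≤ Fintype.card V := by have := hG.nonempty; exact_mod_cast Fintype.card_pos
  have hU1 : 1 ≤ U := hn.trans hU
  obtain ⟨hβ, hβ1, hα, hα24, hend, hq⟩ := accel_parameter_bounds hU1 rfl rfl
  have ht2 : 2 ≤ t := by
    have hlog : 1 < log (18 / ε) := by
      rw [lt_log_iff_exp_lt (by positivity), lt_div_iff₀ hε0]
      nlinarith [exp_one_lt_d9]
    have : (2 : ℝ) ≤ t := by nlinarith
    exact_mod_cast this
  have hK : ∀ z ∈ sumZero V, G.lazyMetropolis z ∈ sumZero V := fun z hz =>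
    (sum_lazyMetropolis z).trans hz
  have hgap : ∀ z : sumZero V, ⟪z, G.lazyMetropolis.restrict hK z⟫ ≤ (1 - α) * ‖z‖ ^ 2 := by
    intro z
    refine (hG.inner_lazyMetropolis_self_le z.2).trans
      (mul_le_mul_of_nonneg_right (sub_le_sub_left ?_ 1) (sq_nonneg _))
    exact one_div_le_one_div_of_le (by positivity) (by gcongr)
  calc ‖v t‖ ^ 2 ≤ (8 * (1 / 2) ^ t + 3 * (β * (1 - α)) ^ t) * ‖v 0‖ ^ 2 :=
        (hv.restrict hK hv0).norm_sq_le (G.lazyMetropolis_isSymmetric.restrict_invariant hK)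
          (fun z => inner_lazyMetropolis_self_nonneg (z : EuclideanSpace ℝ V)) hgap
          fun μ hμ u hu => hu.sq_le_of_mem_Icc hβ hβ1 hα hend hμ ht2
    _ ≤ ε * ‖v 0‖ ^ 2 := by
        gcongr
        exact two_term_decay_le hU1 hε0 (by linarith) (by nlinarith) hq ht

end SimpleGraph

open Classical in
theorem accelerated_consensus_convergence_time_general
    (n : ℕ) (hn : 0 < n)
    (E : Fin n → Fin n → Prop)
    (hE_symm : ∀ i j, E i j → E j i)
    (hE_conn : ∀ i j, Relation.ReflTransGen E i j)
    (d : Fin n → ℕ)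
    (hd : ∀ i, d i = (Finset.univ.filter fun j => j ≠ i ∧ E i j).card)
    (U : ℝ) (hU : (n : ℝ) ≤ U)
    (x y : ℕ → Fin n → ℝ)
    (hy0 : y 0 = x 0)
    (hy : ∀ t i, y (t + 1) i = x t i +
      ∑ j ∈ Finset.univ.filter (fun j => j ≠ i ∧ E i j),
        (x t j - x t i) / (2 * (max (d i) (d j) : ℝ)))
    (hx : ∀ t i, x (t + 1) i =
      y (t + 1) i + (1 - 2 / (9 * U + 1)) * (y (t + 1) i - y t i))
    (xbar : ℝ) (hxbar : xbar = (∑ j, x 0 j) / n)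
    (Esq : ℕ → ℝ) (hEsq : ∀ t, Esq t = ∑ i, (x t i - xbar) ^ 2) :
    ∀ ε : ℝ, 0 < ε → ε < 1 →
      ∀ t : ℕ, 9 * U * Real.log (18 / ε) ≤ (t : ℝ) →
        Esq t ≤ ε * Esq 0 := by
  intro ε hε0 hε1 t ht
  set G := SimpleGraph.fromRel E
  have hN : ∀ i, G.neighborFinset i = univ.filter fun j => j ≠ i ∧ E i j :=
    SimpleGraph.neighborFinset_fromRel hE_symm
  obtain rfl : d = fun i => G.degree i := funext fun i => by
    rw [hd, ← hN, G.card_neighborFinset_eq_degree]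
  have : Nonempty (Fin n) := ⟨⟨0, hn⟩⟩
  have hG : G.Connected := ⟨fun i j => SimpleGraph.reachable_fromRel_of_reflTransGen (hE_conn i j)⟩
  set X : ℕ → EuclideanSpace ℝ (Fin n) := fun t => WithLp.toLp 2 (x t)
  set Y : ℕ → EuclideanSpace ℝ (Fin n) := fun t => WithLp.toLp 2 (y t)
  set c : EuclideanSpace ℝ (Fin n) := WithLp.toLp 2 fun _ => xbar
  have hW : ∀ t, Y (t + 1) = G.lazyMetropolis (X t) := fun t => by
    ext i
    simp only [Y, X, SimpleGraph.lazyMetropolis_apply, hy, hN, SimpleGraph.metropolisDenom]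
  have hXY : ∀ t, X (t + 1) = Y (t + 1) + (1 - 2 / (9 * U + 1)) • (Y (t + 1) - Y t) := fun t => by
    ext i
    simp [X, Y, hx]
  have horbit := (isAccelOrbit_of_momentum (show Y 0 = X 0 from congrArg _ hy0) hW hXY)
    |>.sub_fixedPoint (G.lazyMetropolis_const xbar)
  have hsum : ∑ i, (X 0 - c) i = 0 := by
    simp only [X, c, PiLp.sub_apply, sum_sub_distrib, sum_const, card_univ, Fintype.card_fin,
      nsmul_eq_mul, hxbar]
    field_simp
    ring
  have hnorm : ∀ t, Esq t = ‖X t - c‖ ^ 2 := fun t => by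
    simp [hEsq, EuclideanSpace.norm_sq_eq, X, c]
  rw [hnorm, hnorm]
  exact hG.accel_lazyMetropolis_norm_sq_le (by simpa using hU) horbit hsum hε0 hε1 ht

open Classical in
/-- The accelerated (linear-time) consensus iteration with `U ≥ n`:
for every `ε ∈ (0,1)`, after `t ≥ 9U ln(18/ε)` steps the squared error
`E(t) = ‖x(t) - x̄ 1‖₂²` has shrunk by a factor of `ε`. -/
theorem accelerated_consensus_convergence_time
    (n : ℕ) (hn : 0 < n)
    (E : Fin n → Fin n → Prop)
    (hE_symm : ∀ i j, E i j → E j i)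
    (hE_refl : ∀ i, E i i)
    (hE_conn : ∀ i j, Relation.ReflTransGen E i j)
    (d : Fin n → ℕ)
    (hd : ∀ i, d i = (Finset.univ.filter fun j => j ≠ i ∧ E i j).card)
    (U : ℝ) (hU : (n : ℝ) ≤ U)
    (x y : ℕ → Fin n → ℝ)
    (hy0 : y 0 = x 0)
    (hy : ∀ t i, y (t + 1) i = x t i +
      ∑ j ∈ Finset.univ.filter (fun j => j ≠ i ∧ E i j),
        (x t j - x t i) / (2 * (max (d i) (d j) : ℝ)))
    (hx : ∀ t i, x (t + 1) i =
      y (t + 1) i + (1 - 2 / (9 * U + 1)) * (y (t + 1) i - y t i))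
    (xbar : ℝ) (hxbar : xbar = (∑ j, x 0 j) / n)
    (Esq : ℕ → ℝ) (hEsq : ∀ t, Esq t = ∑ i, (x t i - xbar) ^ 2) :
    ∀ ε : ℝ, 0 < ε → ε < 1 →
      ∀ t : ℕ, 9 * U * Real.log (18 / ε) ≤ (t : ℝ) →
        Esq t ≤ ε * Esq 0 :=
  accelerated_consensus_convergence_time_general n hn E hE_symm hE_conn d hd U hU x y hy0 hy hx xbar
    hxbar Esq hEsq
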